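/- Let n ≥ 1, λ ≥ 0 and μ > 0 be real numbers, and define A σ = (1/(2μ))(σ − (λ/(nλ+2μ)) tr(σ) I) and the deviatoric part dev σ = σ − (1/n) tr(σ) I of a real n×n matrix σ. Then for every real n×n matrix σ: ⟨A σ, σ⟩ ≥ (1/(2μ)) ‖dev σ‖_F², where ⟨X,Y⟩ = tr(Xᵀ Y) is the Frobenius inner product and ‖·‖_F the Frobenius norm. -/
import Mathlib


open Matrix

/-- The Frobenius inner product `⟨X, Y⟩ = tr(Xᵀ Y)` on real `n×n` matrices. -/
noncomputable def frobInner {n : ℕ} (X Y : Matrix (Fin n) (Fin n) ℝ) : ℝ :=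
  Matrix.trace (Xᵀ * Y)

/-- The Frobenius norm on real `n×n` matrices. -/
noncomputable def frobNorm {n : ℕ} (X : Matrix (Fin n) (Fin n) ℝ) : ℝ :=
  Real.sqrt (frobInner X X)

/-- The compliance tensor of a homogeneous isotropic material with Lamé coefficients
`λ ≥ 0`, `μ > 0`: `A σ = (1/(2μ))(σ − (λ/(nλ+2μ)) tr(σ) I)`. -/
noncomputable def complianceA {n : ℕ} (lam mu : ℝ) (σ : Matrix (Fin n) (Fin n) ℝ) :
    Matrix (Fin n) (Fin n) ℝ :=
  (1 / (2 * mu)) •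
    (σ - (lam / ((n : ℝ) * lam + 2 * mu)) • Matrix.trace σ • (1 : Matrix (Fin n) (Fin n) ℝ))

/-- The deviatoric (trace-free) part `dev σ = σ − (1/n) tr(σ) I`. -/
noncomputable def devPart {n : ℕ} (σ : Matrix (Fin n) (Fin n) ℝ) :
    Matrix (Fin n) (Fin n) ℝ :=
  σ - (1 / (n : ℝ)) • Matrix.trace σ • (1 : Matrix (Fin n) (Fin n) ℝ)

lemma frobInner_self_nonneg {n : ℕ} (X : Matrix (Fin n) (Fin n) ℝ) :
    0 ≤ frobInner X X := by
  unfold frobInner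
  rw [Matrix.trace]
  apply Finset.sum_nonneg
  intro i _
  rw [Matrix.diag_apply, Matrix.mul_apply]
  exact Finset.sum_nonneg fun j _ => by simp [Matrix.transpose_apply, mul_self_nonneg]

lemma frobInner_sub_smul {n : ℕ} (σ : Matrix (Fin n) (Fin n) ℝ) (c : ℝ) :
    frobInner (σ - c • Matrix.trace σ • (1 : Matrix (Fin n) (Fin n) ℝ)) σ
      = frobInner σ σ - c * Matrix.trace σ * Matrix.trace σ := by
  unfold frobInner
  simp [Matrix.transpose_sub, Matrix.sub_mul, Matrix.smul_mul, Matrix.trace_sub,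
    Matrix.trace_smul, smul_eq_mul]
  ring

lemma frobInner_sub_smul_self {n : ℕ} (σ : Matrix (Fin n) (Fin n) ℝ) (c : ℝ) :
    frobInner (σ - c • Matrix.trace σ • (1 : Matrix (Fin n) (Fin n) ℝ))
        (σ - c • Matrix.trace σ • (1 : Matrix (Fin n) (Fin n) ℝ))
      = frobInner σ σ - 2 * c * Matrix.trace σ * Matrix.trace σ
          + c * c * Matrix.trace σ * Matrix.trace σ * n := by
  unfold frobInner
  simp [Matrix.transpose_sub, Matrix.sub_mul, Matrix.mul_sub, Matrix.smul_mul,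
    Matrix.mul_smul, Matrix.trace_sub, Matrix.trace_smul, Matrix.trace_one,
    smul_eq_mul, Matrix.trace_transpose]
  ring

/-- Uniform-in-`λ` lower bound: `⟨A σ, σ⟩ ≥ (1/(2μ)) ‖dev σ‖_F²`. -/
theorem complianceA_dev_lower_bound (n : ℕ) (hn : 1 ≤ n) (lam mu : ℝ)
    (hlam : 0 ≤ lam) (hmu : 0 < mu) (σ : Matrix (Fin n) (Fin n) ℝ) :
    (1 / (2 * mu)) * frobNorm (devPart σ) ^ 2 ≤ frobInner (complianceA lam mu σ) σ := by
  have hn0 : (0 : ℝ) < (n : ℝ) := by exact_mod_cast hn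
  set t := Matrix.trace σ with ht
  set S := frobInner σ σ with hS
  have hdev : frobNorm (devPart σ) ^ 2 = S - t * t / n := by
    have h0 := frobInner_self_nonneg (devPart σ)
    rw [frobNorm, Real.sq_sqrt h0, devPart, frobInner_sub_smul_self]
    field_simp
    ring
  have hA : frobInner (complianceA lam mu σ) σ
      = (1 / (2 * mu)) * (S - lam / ((n : ℝ) * lam + 2 * mu) * t * t) := by
    have : complianceA lam mu σ = (1 / (2 * mu)) •
        (σ - (lam / ((n : ℝ) * lam + 2 * mu)) • t • (1 : Matrix (Fin n) (Fin n) ℝ)) := rfl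
    rw [this]
    unfold frobInner at *
    rw [Matrix.transpose_smul, Matrix.smul_mul, Matrix.trace_smul, smul_eq_mul]
    congr 1
    exact frobInner_sub_smul σ _
  rw [hdev, hA]
  have hD : 0 < (n : ℝ) * lam + 2 * mu := by positivity
  have hmu' : 0 < 1 / (2 * mu) := by positivity
  apply mul_le_mul_of_nonneg_left _ (le_of_lt hmu')
  have hkey : lam / ((n : ℝ) * lam + 2 * mu) * t * t ≤ t * t / n := by
    have hle : lam / ((n : ℝ) * lam + 2 * mu) ≤ 1 / n := by
      rw [div_le_div_iff₀ hD hn0]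
      nlinarith
    have ht2 : 0 ≤ t * t := mul_self_nonneg t
    calc lam / ((n : ℝ) * lam + 2 * mu) * t * t
        = (lam / ((n : ℝ) * lam + 2 * mu)) * (t * t) := by ring
      _ ≤ (1 / n) * (t * t) := mul_le_mul_of_nonneg_right hle ht2
      _ = t * t / n := by ring
  linarith
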